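/- arXiv:math/0611632 — 4 statements merged into one kernel-verified Lean document; each statement's English description precedes it below -/
import Mathlib

section
/- Let g : ℝ≥0 × ℝ^d → ℝ^d and h : ℝ≥0 → ℝ^d be continuous. Suppose |g(t,x) − h(t)| ≤ η for all t ∈ [0,1] and all x with |x| ≤ M, that |∫₀^t h(s)ds| ≤ C for all t ∈ [0,1], and that |x₀| + C + η + 1 ≤ M. Then any solution x of x' = g(t,x), x(0) = x₀ on [0,1] satisfies |x(t)| ≤ M and |x(t) − x₀ − ∫₀^t h(s)ds| ≤ η for all t ∈ [0,1]. -/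
open Set intervalIntegral

/-!
While `x` stays in the ball of radius `M`, the deviation `x t - x₀ - ∫₀ᵗ h` has derivative
`g t (x t) - h t` of norm at most `η`, so by the mean value inequality it is at most `η t ≤ η`.
Then `‖x t‖ ≤ η + ‖x₀‖ + C < M`, so `x` can never reach the sphere of radius `M`: at the first
time it did, it would still be strictly inside.
-/

theorem ContinuousOn.forall_lt_of_forall_Ico_lt {u : ℝ → ℝ} {a b c : ℝ}
    (hu : ContinuousOn u (Icc a b))
    (hstep : ∀ t ∈ Icc a b, (∀ s ∈ Ico a t, u s < c) → u t < c) :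
    ∀ t ∈ Icc a b, u t < c := by
  by_contra! ⟨t₀, ht₀, hct₀⟩
  -- the first time at which `u` reaches `c`
  set τ := sInf (Icc a b ∩ u ⁻¹' Ici c)
  have hbdd : BddBelow (Icc a b ∩ u ⁻¹' Ici c) := ⟨a, fun s hs => hs.1.1⟩
  have hτ : τ ∈ Icc a b ∩ u ⁻¹' Ici c :=
    (hu.preimage_isClosed_of_isClosed isClosed_Icc isClosed_Ici).csInf_mem ⟨t₀, ht₀, hct₀⟩ hbdd
  refine (hstep τ hτ.1 fun s hs => ?_).not_ge hτ.2
  by_contra! hcs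
  exact hs.2.not_ge (csInf_le hbdd ⟨⟨hs.1, hs.2.le.trans hτ.1.2⟩, hcs⟩)

theorem norm_sub_sub_integral_le_of_norm_deriv_sub_le {E : Type*} [NormedAddCommGroup E]
    [NormedSpace ℝ E] [CompleteSpace E] {x v h : ℝ → E} {a b η : ℝ} (hab : a ≤ b)
    (hh : Continuous h) (hx : ∀ t ∈ Icc a b, HasDerivWithinAt x (v t) (Icc a b) t)
    (hv : ∀ t ∈ Ico a b, ‖v t - h t‖ ≤ η) :
    ‖x b - x a - ∫ s in a..b, h s‖ ≤ η * (b - a) := by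
  have hF : ∀ t ∈ Icc a b, HasDerivWithinAt (fun t => x t - ∫ s in a..t, h s)
      (v t - h t) (Icc a b) t := fun t ht =>
    (hx t ht).sub (hh.integral_hasStrictDerivAt a t).hasDerivAt.hasDerivWithinAt
  have := norm_image_sub_le_of_norm_deriv_le_segment' hF hv b ⟨hab, le_rfl⟩
  simpa only [integral_same, sub_zero, sub_right_comm] using this

theorem stmt_4_general (d : ℕ) (x₀ : Fin d → ℝ)
    (g : ℝ → (Fin d → ℝ) → (Fin d → ℝ)) (h : ℝ → (Fin d → ℝ))
    (hh : Continuous h)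
    (η C M : ℝ) (hη : 0 < η)
    (hgh : ∀ t ∈ Icc (0:ℝ) 1, ∀ x : Fin d → ℝ, ‖x‖ ≤ M → ‖g t x - h t‖ ≤ η)
    (hint : ∀ t ∈ Icc (0:ℝ) 1, ‖∫ s in (0:ℝ)..t, h s‖ ≤ C)
    (hsize : ‖x₀‖ + C + η + 1 ≤ M)
    (x : ℝ → (Fin d → ℝ)) (hx0 : x 0 = x₀)
    (hxsol : ∀ t ∈ Icc (0:ℝ) 1, HasDerivWithinAt x (g t (x t)) (Icc 0 1) t) :
    ∀ t ∈ Icc (0:ℝ) 1, ‖x t‖ ≤ M ∧ ‖x t - x₀ - ∫ s in (0:ℝ)..t, h s‖ ≤ η := by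
  have hdev : ∀ t ∈ Icc (0:ℝ) 1, (∀ s ∈ Ico 0 t, ‖x s‖ < M) →
      ‖x t - x₀ - ∫ s in (0:ℝ)..t, h s‖ ≤ η := by
    intro t ht hball
    have hsub : Icc 0 t ⊆ Icc (0:ℝ) 1 := Icc_subset_Icc_right ht.2
    calc ‖x t - x₀ - ∫ s in (0:ℝ)..t, h s‖ ≤ η * (t - 0) := hx0 ▸
          norm_sub_sub_integral_le_of_norm_deriv_sub_le ht.1 hh
            (fun s hs => (hxsol s (hsub hs)).mono hsub)
            (fun s hs => hgh s (hsub (Ico_subset_Icc_self hs)) _ (hball s hs).le)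
      _ ≤ η := by nlinarith [ht.2]
  have hball : ∀ t ∈ Icc (0:ℝ) 1, ‖x t‖ < M := by
    refine (HasDerivWithinAt.continuousOn hxsol).norm.forall_lt_of_forall_Ico_lt
      fun t ht hprev => ?_
    calc ‖x t‖ = ‖(x t - x₀ - ∫ s in (0:ℝ)..t, h s) + x₀ + ∫ s in (0:ℝ)..t, h s‖ := by
          congr 1; abel
      _ ≤ ‖x t - x₀ - ∫ s in (0:ℝ)..t, h s‖ + ‖x₀‖ + ‖∫ s in (0:ℝ)..t, h s‖ := norm_add₃_le
      _ < M := by linarith [hdev t ht hprev, hint t ht]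
  exact fun t ht =>
    ⟨(hball t ht).le, hdev t ht fun s hs => hball s ⟨hs.1, hs.2.le.trans ht.2⟩⟩

theorem stmt_4 (d : ℕ) (hd : 0 < d) (x₀ : Fin d → ℝ)
    (g : ℝ → (Fin d → ℝ) → (Fin d → ℝ)) (h : ℝ → (Fin d → ℝ))
    (hg : Continuous fun p : ℝ × (Fin d → ℝ) => g p.1 p.2)
    (hh : Continuous h)
    (η C M : ℝ) (hη : 0 < η) (hC : 0 < C) (hM : 0 < M)
    (hgh : ∀ t ∈ Icc (0:ℝ) 1, ∀ x : Fin d → ℝ, ‖x‖ ≤ M → ‖g t x - h t‖ ≤ η)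
    (hint : ∀ t ∈ Icc (0:ℝ) 1, ‖∫ s in (0:ℝ)..t, h s‖ ≤ C)
    (hsize : ‖x₀‖ + C + η + 1 ≤ M)
    (x : ℝ → (Fin d → ℝ)) (hx0 : x 0 = x₀)
    (hxsol : ∀ t ∈ Icc (0:ℝ) 1, HasDerivWithinAt x (g t (x t)) (Icc 0 1) t) :
    ∀ t ∈ Icc (0:ℝ) 1, ‖x t‖ ≤ M ∧ ‖x t - x₀ - ∫ s in (0:ℝ)..t, h s‖ ≤ η :=
  stmt_4_general d x₀ g h hh η C M hη hgh hint hsize x hx0 hxsol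
end

section
/- Let f : ℝ≥0 × ℝ^d → ℝ^d be continuous and suppose F(x) = lim_{T→∞}(1/T)∫₀^T f(t,x)dt exists for some fixed x ∈ ℝ^d. Then for every t₀ ≥ 0 and every δ > 0 there exist α₀ > 0 and ε₁ > 0 such that for all ε ∈ (0, ε₁] there is α ∈ (ε^{1/2}, α₀] with |(ε/α)∫_{t₀/ε}^{t₀/ε + Tα/ε} f(τ, x)dτ − T·F(x)| < δ for all T ∈ [0,1]. -/
open Filter Set intervalIntegral

theorem stmt_6 (d : ℕ) (hd : 0 < d)
    (f : ℝ → (Fin d → ℝ) → (Fin d → ℝ))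
    (hf : Continuous fun p : ℝ × (Fin d → ℝ) => f p.1 p.2)
    (x : Fin d → ℝ) (Fx : Fin d → ℝ)
    (hF : Tendsto (fun T : ℝ => (1 / T) • ∫ t in (0:ℝ)..T, f t x) atTop (nhds Fx)) :
    ∀ t₀ ≥ (0:ℝ), ∀ δ > 0, ∃ α₀ > 0, ∃ ε₁ > 0, ∀ ε : ℝ, ε ∈ Ioc 0 ε₁ →
      ∃ α : ℝ, α ∈ Ioc (ε ^ ((1:ℝ)/2)) α₀ ∧
        ∀ T ∈ Icc (0:ℝ) 1,
          ‖(ε / α) • (∫ τ in (t₀ / ε)..(t₀ / ε + T * α / ε), f τ x) - T • Fx‖ < δ := by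
  intro t₀ ht₀ δ hδ
  have hφc : Continuous fun τ : ℝ => f τ x :=
    hf.comp (continuous_id.prodMk continuous_const)
  set g : ℝ → (Fin d → ℝ) := fun S => ∫ τ in (0:ℝ)..S, f τ x with hg
  have hgc : Continuous g :=
    intervalIntegral.continuous_primitive (fun a b => hφc.intervalIntegrable a b) 0
  set E : ℝ → (Fin d → ℝ) := fun S => g S - S • Fx with hE
  have hEc : Continuous E := hgc.sub (continuous_id.smul continuous_const)
  set c : ℝ := δ / (4 * (2 * t₀ + 1)) with hc
  have hcpos : 0 < c := by positivity
  -- linear growth bound at infinity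
  obtain ⟨N, hN⟩ := (Metric.tendsto_atTop.mp hF) c hcpos
  set S₀ : ℝ := max N 1 with hS₀
  have hS₀1 : (1:ℝ) ≤ S₀ := le_max_right _ _
  have hbig : ∀ S : ℝ, S₀ ≤ S → ‖E S‖ ≤ c * S := by
    intro S hS
    have hSpos : 0 < S := lt_of_lt_of_le one_pos (hS₀1.trans hS)
    have h1 := hN S ((le_max_left _ _).trans hS)
    rw [dist_eq_norm] at h1
    have key : (1 / S) • E S = (1 / S) • g S - Fx := by
      rw [hE]
      simp only [smul_sub, smul_smul]
      rw [one_div_mul_cancel hSpos.ne', one_smul]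
    have h2 : ‖(1 / S) • E S‖ < c := by rw [key]; exact h1
    rw [norm_smul, Real.norm_eq_abs, abs_of_pos (by positivity : (0:ℝ) < 1/S)] at h2
    have := (div_le_iff₀ hSpos).mp (le_of_lt (by rwa [one_div, inv_mul_eq_div] at h2))
    linarith [this]
  obtain ⟨C, hC⟩ := isCompact_Icc.exists_bound_of_continuousOn (s := Icc (0:ℝ) S₀)
    hEc.continuousOn
  have hC0 : 0 ≤ C := le_trans (norm_nonneg _) (hC 0 ⟨le_refl _, by linarith⟩)
  have hlin : ∀ S : ℝ, 0 ≤ S → ‖E S‖ ≤ C + c * S := by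
    intro S hS
    rcases le_or_gt S S₀ with h | h
    · have := hC S ⟨hS, h⟩
      nlinarith
    · have := hbig S h.le
      linarith
  refine ⟨1, one_pos, min (1/2) (δ / (4 * (C + 1))), by positivity, ?_⟩
  rintro ε ⟨hε0, hε1⟩
  have hεhalf : ε ≤ 1/2 := hε1.trans (min_le_left _ _)
  have hεδ : ε ≤ δ / (4 * (C + 1)) := hε1.trans (min_le_right _ _)
  refine ⟨1, ⟨Real.rpow_lt_one hε0.le (by linarith) (by norm_num), le_refl 1⟩, ?_⟩
  intro T hT
  obtain ⟨hT0, hT1⟩ := hT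
  set s : ℝ := t₀ / ε with hs
  have hs0 : 0 ≤ s := div_nonneg ht₀ hε0.le
  set u : ℝ := T / ε with hu
  have hu0 : 0 ≤ u := div_nonneg hT0 hε0.le
  have heu : ε * u = T := by rw [hu]; field_simp
  have hes : ε * s = t₀ := by rw [hs]; field_simp
  have hsimp : t₀ / ε + T * 1 / ε = s + u := by rw [mul_one]
  rw [div_one, hsimp]
  have hsplit : (∫ τ in s..(s + u), f τ x) = g (s + u) - g s := by
    rw [hg]
    rw [← intervalIntegral.integral_interval_sub_left
      (hφc.intervalIntegrable 0 (s + u)) (hφc.intervalIntegrable 0 s)]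
  rw [hsplit]
  have hrw : ε • (g (s + u) - g s) - T • Fx = ε • E (s + u) - ε • E s := by
    rw [hE, ← heu]
    module
  rw [hrw]
  have hb1 := hlin (s + u) (by linarith)
  have hb2 := hlin s hs0
  have hnorm : ‖ε • E (s + u) - ε • E s‖ ≤ ε * ‖E (s + u)‖ + ε * ‖E s‖ := by
    calc ‖ε • E (s + u) - ε • E s‖ ≤ ‖ε • E (s + u)‖ + ‖ε • E s‖ := norm_sub_le _ _
    _ = ε * ‖E (s + u)‖ + ε * ‖E s‖ := by
        rw [norm_smul, norm_smul, Real.norm_eq_abs, abs_of_pos hε0]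
  have hcb : c * (2 * t₀ + 1) = δ / 4 := by
    rw [hc]; field_simp
  have h2εC : 2 * ε * C < δ / 2 := by
    have : ε * (C + 1) ≤ δ / 4 := by
      calc ε * (C + 1) ≤ (δ / (4 * (C + 1))) * (C + 1) := by nlinarith
      _ = δ / 4 := by field_simp
    nlinarith
  have q1 : ε * ‖E (s + u)‖ ≤ ε * (C + c * (s + u)) := mul_le_mul_of_nonneg_left hb1 hε0.le
  have q2 : ε * ‖E s‖ ≤ ε * (C + c * s) := mul_le_mul_of_nonneg_left hb2 hε0.le
  have e1 : ε * (C + c * (s + u)) + ε * (C + c * s) = 2 * ε * C + c * (2 * t₀ + T) := by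
    rw [show (2 * t₀ + T) = ε * s + (ε * s + ε * u) by rw [hes, heu]; ring]; ring
  have hmain : ε * ‖E (s + u)‖ + ε * ‖E s‖ ≤ 2 * ε * C + c * (2 * t₀ + T) := by linarith
  have hfin : c * (2 * t₀ + T) ≤ δ / 4 := by
    rw [← hcb]
    nlinarith
  linarith [hnorm, hmain, hfin]
end

section
/- If f : ℝ≥0 × C([-r,0],ℝ^d) → ℝ^d is continuous and quasi-bounded (bounded on ℝ≥0 × B for every bounded B ⊂ C([-r,0],ℝ^d)), and x : [-r, b) → ℝ^d is a noncontinuable (maximal) solution of x'(t) = f(t, x_t), x₀ = φ with b < ∞, then x is unbounded on [-r, b). -/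
/-!
Suppose `‖x‖ ≤ M` on `[-r, b)`. Quasi-boundedness bounds `f (t, x_t)` by some `K`, so `x` is
`K`-Lipschitz on `[0, b)`, has a limit at `b`, and extends to a solution on `[0, b]`. Peano's
theorem for the delay equation then continues it beyond `b`, contradicting maximality. Peano's
theorem is proved with Tonelli's retarded approximations `y t = y b + ∫ s in b..t - h, f s y_s`
(obtained by finitely many iterations, since the right side only looks back to time `t - h`):
they are equi-Lipschitz and `K h`-approximate solutions, so Arzelà–Ascoli gives a subsequence
converging to a solution.
-/

open Filter Set Topology MeasureTheory
open scoped NNReal BoundedContinuousFunction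

variable {E : Type*} [NormedAddCommGroup E]

def segmentMap (r : ℝ) (y : C(ℝ, E)) : C(ℝ, C(Icc (-r) (0:ℝ), E)) :=
  ContinuousMap.curry ⟨fun p : ℝ × Icc (-r) (0:ℝ) => y (p.1 + p.2), by fun_prop⟩

@[simp] lemma segmentMap_apply (r : ℝ) (y : C(ℝ, E)) (t : ℝ) (θ : Icc (-r) (0:ℝ)) :
    segmentMap r y t θ = y (t + θ) := rfl

lemma norm_segmentMap_le {r R : ℝ} {y : C(ℝ, E)} (hR : 0 ≤ R) (hy : ∀ t, ‖y t‖ ≤ R) (t : ℝ) :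
    ‖segmentMap r y t‖ ≤ R :=
  (ContinuousMap.norm_le _ hR).2 fun _ => hy _

lemma segmentMap_congr {r b t : ℝ} {y z : C(ℝ, E)} (h : EqOn y z (Iic b)) (ht : t ≤ b) :
    segmentMap r y t = segmentMap r z t :=
  ContinuousMap.ext fun θ => h (show t + θ ≤ b by linarith [θ.2.2])

lemma continuous_apply_segmentMap {F : Type*} [TopologicalSpace F] {r : ℝ}
    {f : ℝ → C(Icc (-r) (0:ℝ), E) → F}
    (hf : Continuous (Function.uncurry f)) (y : C(ℝ, E)) :
    Continuous fun s => f s (segmentMap r y s) :=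
  hf.comp (continuous_id.prodMk (segmentMap r y).continuous)

lemma TendstoUniformlyOn.tendsto_segmentMap {ι : Type*} {l : Filter ι} {r c s : ℝ}
    {y : ι → C(ℝ, E)} {Y : C(ℝ, E)} (hy : TendstoUniformlyOn (fun i => ⇑(y i)) Y l (Iic c))
    (hs : s ≤ c) : Tendsto (fun i => segmentMap r (y i) s) l (𝓝 (segmentMap r Y s)) := by
  rw [ContinuousMap.tendsto_iff_tendstoUniformly, ← tendstoUniformlyOn_univ]
  refine (hy.comp fun θ : Icc (-r) (0:ℝ) => s + θ).mono fun θ _ => ?_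
  simp only [mem_preimage, mem_Iic]
  linarith [θ.2.2]

lemma ContinuousOn.exists_continuousMap_eqOn_Icc {x : ℝ → E} {a b : ℝ} (hab : a ≤ b)
    (hx : ContinuousOn x (Icc a b)) :
    ∃ g : C(ℝ, E), EqOn g x (Icc a b) ∧ range g ⊆ x '' Icc a b :=
  ⟨ContinuousMap.IccExtend hab ⟨(Icc a b).domRestrict x, hx.domRestrict⟩,
    fun _ ht => IccExtend_of_mem hab ((Icc a b).domRestrict x) ht,
    by rintro _ ⟨t, rfl⟩; exact ⟨_, (projIcc a b hab t).2, rfl⟩⟩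

lemma ContinuousOn.exists_continuousMap_eqOn_Ico {x : ℝ → E} {a b : ℝ} {L : E} {s : Set E}
    (hab : a ≤ b) (hx : ContinuousOn x (Ico a b)) (hL : Tendsto x (𝓝[<] b) (𝓝 L))
    (hxs : MapsTo x (Ico a b) s) (hLs : L ∈ s) :
    ∃ g : C(ℝ, E), EqOn g x (Ico a b) ∧ ∀ t, g t ∈ s := by
  classical
  have hx' : ContinuousOn (Function.update x b L) (Icc a b) := by
    refine continuousOn_update_iff.2 ⟨by rwa [Icc_sdiff_right], fun _ => ?_⟩
    rcases hab.lt_or_eq with hab | rfl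
    · rwa [Icc_sdiff_right, nhdsWithin_Ico_eq_nhdsLT hab]
    · simp
  obtain ⟨g, hgx, hgs⟩ := hx'.exists_continuousMap_eqOn_Icc hab
  refine ⟨g, fun t ht => (hgx (Ico_subset_Icc_self ht)).trans
    (Function.update_of_ne ht.2.ne _ _), fun t => ?_⟩
  obtain ⟨u, hu, hgu⟩ := hgs (mem_range_self t)
  rw [← hgu]
  rcases eq_or_ne u b with rfl | hub
  · simpa using hLs
  · rw [Function.update_of_ne hub]
    exact hxs ⟨hu.1, lt_of_le_of_ne hu.2 hub⟩

lemma LipschitzOnWith.exists_tendsto_nhdsLT [CompleteSpace E] {x : ℝ → E} {K : ℝ≥0} {a b : ℝ}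
    (hab : a < b) (hx : LipschitzOnWith K x (Ico a b)) : ∃ L, Tendsto x (𝓝[<] b) (𝓝 L) := by
  have : NeBot (𝓝[Ico a b] b) := by
    rw [nhdsWithin_Ico_eq_nhdsLT hab]; infer_instance
  have hcauchy := (cauchy_nhds (a := b)).mono' this nhdsWithin_le_nhds
  rw [← nhdsWithin_Ico_eq_nhdsLT hab]
  exact cauchy_map_iff_exists_tendsto.1 (hcauchy.map_of_le hx.uniformContinuousOn inf_le_right)

lemma continuousOn_segments_of_continuousOn {r a c : ℝ} {x : ℝ → E} {X : ℝ → C(Icc (-r) (0:ℝ), E)}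
    (hr : 0 ≤ r) (hX : ∀ t θ, X t θ = x (t + θ)) (hx : ContinuousOn x (Icc (a - r) c)) :
    ContinuousOn X (Icc a c) := by
  rcases lt_or_ge c a with hca | hac
  · simp [Icc_eq_empty_of_lt hca]
  obtain ⟨g, hgx, -⟩ := hx.exists_continuousMap_eqOn_Icc (by linarith)
  refine (segmentMap r g).continuous.continuousOn.congr fun t ht => ContinuousMap.ext fun θ => ?_
  rw [hX, segmentMap_apply, hgx ⟨by linarith [θ.2.1, ht.1], by linarith [θ.2.2, ht.2]⟩]

theorem exists_subseq_tendstoUniformlyOn [ProperSpace E] {y : ℕ → C(ℝ, E)} {g : C(ℝ, E)}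
    {b c R : ℝ} {K : ℝ≥0} (hbc : b ≤ c) (hyg : ∀ j, EqOn (y j) g (Iic b))
    (hyR : ∀ j, ∀ t ∈ Icc b c, ‖y j t‖ ≤ R) (hyK : ∀ j, LipschitzOnWith K (y j) (Icc b c)) :
    ∃ Y : C(ℝ, E), ∃ φ : ℕ → ℕ, StrictMono φ ∧ EqOn Y g (Iic b) ∧
      TendstoUniformlyOn (fun l => ⇑(y (φ l))) Y atTop (Iic c) := by
  set z : ℕ → Icc b c →ᵇ E := fun j =>
    BoundedContinuousFunction.mkOfCompact ⟨(Icc b c).domRestrict (y j), by fun_prop⟩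
  have hzR : ∀ (u : Icc b c →ᵇ E) t, u ∈ range z → u t ∈ Metric.closedBall 0 R := by
    rintro _ t ⟨j, rfl⟩
    exact mem_closedBall_zero_iff.2 (hyR j t t.2)
  have hequi : Equicontinuous ((↑) : range z → Icc b c → E) :=
    (LipschitzWith.uniformEquicontinuous _ K fun u => by
      obtain ⟨j, hj⟩ := u.2
      rw [← hj]
      exact (hyK j).to_restrict).equicontinuous
  obtain ⟨Z, -, φ, hφ, hZ⟩ := (BoundedContinuousFunction.arzela_ascoli _
    (isCompact_closedBall 0 R) _ hzR hequi).isSeqCompact fun j => subset_closure (mem_range_self j)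
  have hZb : Z ⟨b, left_mem_Icc.2 hbc⟩ = g b :=
    tendsto_nhds_unique
      (((BoundedContinuousFunction.lipschitz_eval_const _).continuous.tendsto Z).comp hZ)
      (tendsto_const_nhds.congr fun l => (hyg (φ l) (mem_Iic.2 le_rfl)).symm)
  let Y : C(ℝ, E) := ⟨fun t => g (min t b) + (Z (projIcc b c hbc t) - g b), by fun_prop⟩
  have hYg : EqOn Y g (Iic b) := fun t ht => by
    simp [Y, min_eq_left (mem_Iic.1 ht), projIcc_of_le_left hbc (mem_Iic.1 ht), hZb]
  have hdist : ∀ l, ∀ t ∈ Iic c, dist (Y t) (y (φ l) t) ≤ dist Z (z (φ l)) := by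
    intro l t ht
    rcases le_total t b with htb | hbt
    · rw [hYg htb, hyg _ htb, dist_self]
      exact dist_nonneg
    · have htbc : t ∈ Icc b c := ⟨hbt, ht⟩
      have hYt : Y t = Z ⟨t, htbc⟩ := by simp [Y, min_eq_right hbt, projIcc_of_mem hbc htbc]
      rw [hYt]
      exact BoundedContinuousFunction.dist_coe_le_dist (f := Z) (g := z (φ l)) ⟨t, htbc⟩
  refine ⟨Y, φ, hφ, hYg, Metric.tendstoUniformlyOn_iff.2 fun ε hε => ?_⟩
  filter_upwards [(tendsto_iff_dist_tendsto_zero.1 hZ).eventually (gt_mem_nhds hε)] with l hl t ht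
  exact (hdist l t ht).trans_lt (by rwa [dist_comm])

variable [NormedSpace ℝ E]

def IsSolutionOn (r : ℝ) (f : ℝ → C(Icc (-r) (0:ℝ), E) → E) (y : C(ℝ, E)) (a b : ℝ) : Prop :=
  ∀ t ∈ Icc a b, y t = y a + ∫ s in a..t, f s (segmentMap r y s)

section Solutions

variable {r : ℝ} {f : ℝ → C(Icc (-r) (0:ℝ), E) → E}

lemma IsSolutionOn.congr {y z : C(ℝ, E)} {a b : ℝ} (hz : IsSolutionOn r f z a b)
    (h : EqOn y z (Iic b)) (hab : a ≤ b) : IsSolutionOn r f y a b := by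
  intro t ht
  rw [h ht.2, h hab, hz t ht]
  congr 1
  refine intervalIntegral.integral_congr fun s hs => ?_
  rw [uIcc_of_le ht.1] at hs
  rw [segmentMap_congr h (hs.2.trans ht.2)]

lemma isSolutionOn_of_forall_mem_Ico (hf : Continuous (Function.uncurry f)) {y : C(ℝ, E)}
    {a b : ℝ} (hab : a < b)
    (hy : ∀ t ∈ Ico a b, y t = y a + ∫ s in a..t, f s (segmentMap r y s)) :
    IsSolutionOn r f y a b :=
  EqOn.of_subset_closure hy y.continuous.continuousOn
    (continuous_const.add (intervalIntegral.continuous_primitive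
      (fun _ _ => (continuous_apply_segmentMap hf y).intervalIntegrable _ _) a)).continuousOn
    Ico_subset_Icc_self (closure_Ico hab.ne).ge

lemma IsSolutionOn.trans (hf : Continuous (Function.uncurry f)) {y : C(ℝ, E)} {a b c : ℝ}
    (hab : IsSolutionOn r f y a b) (hbc : IsSolutionOn r f y b c) (hb : b ∈ Icc a c) :
    IsSolutionOn r f y a c := by
  intro t ht
  rcases le_total t b with htb | hbt
  · exact hab t ⟨ht.1, htb⟩
  · have hint := fun u v =>
      (continuous_apply_segmentMap hf y).intervalIntegrable (μ := volume) u v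
    rw [hbc t ⟨hbt, ht.2⟩, hab b ⟨hb.1, le_rfl⟩, add_assoc,
      intervalIntegral.integral_add_adjacent_intervals (hint a b) (hint b t)]

lemma lipschitzOnWith_of_eq_add_integral {x F : ℝ → E} {a b : ℝ} {K : ℝ≥0}
    (hx : ∀ t ∈ Ico a b, x t = x a + ∫ s in a..t, F s)
    (hF : ∀ t ∈ Ico a b, IntervalIntegrable F volume a t) (hK : ∀ s ∈ Ico a b, ‖F s‖ ≤ K) :
    LipschitzOnWith K x (Ico a b) := by
  refine LipschitzOnWith.of_dist_le_mul fun t ht s hs => ?_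
  rw [dist_eq_norm, hx t ht, hx s hs, add_sub_add_left_eq_sub,
    intervalIntegral.integral_interval_sub_left (hF t ht) (hF s hs), Real.dist_eq]
  exact intervalIntegral.norm_integral_le_of_norm_le_const fun u hu =>
    hK u (ordConnected_Ico.uIcc_subset hs ht (uIoc_subset_uIcc hu))

theorem exists_continuousMap_isSolutionOn_of_bounded [CompleteSpace E] {b M : ℝ} {K : ℝ≥0}
    (hf : Continuous (Function.uncurry f)) (hr : 0 ≤ r) (hb : 0 < b)
    {x : ℝ → E} {X : ℝ → C(Icc (-r) (0:ℝ), E)} (hxc : ContinuousOn x (Ico (-r) b))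
    (hX : ∀ t θ, X t θ = x (t + θ))
    (hsol : ∀ t ∈ Ico (0:ℝ) b, x t = x 0 + ∫ s in (0:ℝ)..t, f s (X s))
    (hM : ∀ t ∈ Ico (-r) b, ‖x t‖ ≤ M) (hK : ∀ t ∈ Ico 0 b, ∀ u, ‖u‖ ≤ M → ‖f t u‖ ≤ K) :
    ∃ g : C(ℝ, E), EqOn g x (Ico (-r) b) ∧ (∀ t, ‖g t‖ ≤ M) ∧ IsSolutionOn r f g 0 b := by
  have hint : ∀ t ∈ Ico 0 b, IntervalIntegrable (fun s => f s (X s)) volume 0 t := fun t ht =>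
    (hf.comp_continuousOn (continuousOn_id.prodMk (continuousOn_segments_of_continuousOn hr hX
      (hxc.mono (Icc_subset_Ico (by linarith) ht.2))))).intervalIntegrable_of_Icc ht.1
  have hXM : ∀ t ∈ Ico 0 b, ‖X t‖ ≤ M := fun t ht =>
    (ContinuousMap.norm_le _ ((norm_nonneg _).trans (hM 0 ⟨by linarith, hb⟩))).2 fun θ => by
      rw [hX]
      exact hM _ ⟨by linarith [θ.2.1, ht.1], by linarith [θ.2.2, ht.2]⟩
  obtain ⟨L, hL⟩ := (lipschitzOnWith_of_eq_add_integral hsol hint fun t ht =>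
    hK t ht _ (hXM t ht)).exists_tendsto_nhdsLT hb
  have hxM : MapsTo x (Ico (-r) b) (Metric.closedBall 0 M) := fun t ht => by simpa using hM t ht
  have hLM : L ∈ Metric.closedBall 0 M := Metric.isClosed_closedBall.mem_of_tendsto hL <|
    mem_of_superset (Ioo_mem_nhdsLT hb) fun t ht => hxM ⟨by linarith [ht.1], ht.2⟩
  obtain ⟨g, hgx, hgM⟩ := hxc.exists_continuousMap_eqOn_Ico (by linarith) hL hxM hLM
  refine ⟨g, hgx, fun t => by simpa using hgM t, isSolutionOn_of_forall_mem_Ico hf hb ?_⟩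
  intro t ht
  have hXg : ∀ s ∈ Icc 0 t, X s = segmentMap r g s := fun s hs =>
    ContinuousMap.ext fun θ => by
      rw [hX, segmentMap_apply, hgx ⟨by linarith [θ.2.1, hs.1], by linarith [θ.2.2, hs.2, ht.2]⟩]
  have h0 : (0:ℝ) ∈ Ico (-r) b := ⟨by linarith, hb⟩
  rw [hgx ⟨by linarith [ht.1], ht.2⟩, hgx h0, hsol t ht]
  congr 1
  refine intervalIntegral.integral_congr fun s hs => ?_
  rw [uIcc_of_le ht.1] at hs
  simp only [hXg s hs]

section Tonelli

lemma norm_integral_apply_segmentMap_le {y : C(ℝ, E)} {b c R p q : ℝ} {K : ℝ≥0}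
    (hR : ∀ t, ‖y t‖ ≤ R) (hfK : ∀ s ∈ Icc b c, ∀ u, ‖u‖ ≤ R → ‖f s u‖ ≤ K)
    (hp : p ∈ Icc b c) (hq : q ∈ Icc b c) :
    ‖∫ s in p..q, f s (segmentMap r y s)‖ ≤ K * |q - p| := by
  have hR0 : 0 ≤ R := (norm_nonneg _).trans (hR 0)
  exact intervalIntegral.norm_integral_le_of_norm_le_const fun s hs =>
    hfK s (ordConnected_Icc.uIcc_subset hp hq (uIoc_subset_uIcc hs)) _
      (norm_segmentMap_le hR0 hR s)

-- Clamping the retarded time to `[b, c]` keeps every integrand where `f` is bounded.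
noncomputable def tonelliStep (hf : Continuous (Function.uncurry f)) (g : C(ℝ, E))
    {b c : ℝ} (hbc : b ≤ c) (h : ℝ) (y : C(ℝ, E)) : C(ℝ, E) :=
  ⟨fun t => g (min t b) + ∫ s in b..(projIcc b c hbc (t - h) : ℝ), f s (segmentMap r y s), by
    have := intervalIntegral.continuous_primitive
      (fun _ _ => (continuous_apply_segmentMap hf y).intervalIntegrable (μ := volume) _ _) b
    fun_prop⟩

variable (hf : Continuous (Function.uncurry f)) (g : C(ℝ, E))
  {b c : ℝ} (hbc : b ≤ c) {h : ℝ}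

lemma tonelliStep_apply (y : C(ℝ, E)) (t : ℝ) : tonelliStep hf g hbc h y t =
    g (min t b) + ∫ s in b..(projIcc b c hbc (t - h) : ℝ), f s (segmentMap r y s) := rfl

lemma tonelliStep_eqOn_Iic (hh : 0 ≤ h) (y : C(ℝ, E)) :
    EqOn (tonelliStep hf g hbc h y) g (Iic b) := fun t ht => by
  rw [tonelliStep_apply, projIcc_of_le_left hbc (by linarith [mem_Iic.1 ht]), min_eq_left ht,
    intervalIntegral.integral_same, add_zero]

lemma tonelliStep_eqOn_of_eqOn {y z : C(ℝ, E)} {u : ℝ} (hyz : EqOn y z (Iic u)) (hbu : b ≤ u) :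
    EqOn (tonelliStep hf g hbc h y) (tonelliStep hf g hbc h z) (Iic (u + h)) := fun t ht => by
  rw [tonelliStep_apply, tonelliStep_apply]
  congr 1
  refine intervalIntegral.integral_congr fun s hs => ?_
  have hp : (projIcc b c hbc (t - h) : ℝ) ≤ u := by
    rw [coe_projIcc]
    exact max_le hbu (min_le_of_right_le (by linarith [mem_Iic.1 ht]))
  rw [uIcc_of_le (projIcc b c hbc (t - h)).2.1] at hs
  simp only [segmentMap_congr hyz (hs.2.trans hp)]

lemma norm_tonelliStep_le {M : ℝ} {K : ℝ≥0} (hKc : K * (c - b) ≤ 1) (hg : ∀ t, ‖g t‖ ≤ M)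
    (hfK : ∀ s ∈ Icc b c, ∀ u, ‖u‖ ≤ M + 1 → ‖f s u‖ ≤ K) {y : C(ℝ, E)}
    (hy : ∀ t, ‖y t‖ ≤ M + 1) (t : ℝ) : ‖tonelliStep hf g hbc h y t‖ ≤ M + 1 := by
  set p := projIcc b c hbc (t - h)
  have hint := norm_integral_apply_segmentMap_le hy hfK (left_mem_Icc.2 hbc) p.2
  have hpb : K * |(p : ℝ) - b| ≤ 1 :=
    (mul_le_mul_of_nonneg_left (by rw [abs_of_nonneg (by linarith [p.2.1])]; linarith [p.2.2])
      K.2).trans hKc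
  calc ‖tonelliStep hf g hbc h y t‖
      ≤ ‖g (min t b)‖ + ‖∫ s in b..(p : ℝ), f s (segmentMap r y s)‖ := norm_add_le _ _
    _ ≤ M + 1 := add_le_add (hg _) (hint.trans hpb)


lemma exists_eqOn_tonelliStep {M : ℝ} {K : ℝ≥0} (hKc : K * (c - b) ≤ 1) (hg : ∀ t, ‖g t‖ ≤ M)
    (hfK : ∀ s ∈ Icc b c, ∀ u, ‖u‖ ≤ M + 1 → ‖f s u‖ ≤ K) (hh : 0 < h) :
    ∃ y : C(ℝ, E), (∀ t, ‖y t‖ ≤ M + 1) ∧ EqOn (tonelliStep hf g hbc h y) y (Iic c) := by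
  set Φ := tonelliStep hf g hbc h
  have hbound : ∀ k t, ‖Φ^[k] g t‖ ≤ M + 1 := by
    intro k
    induction k with
    | zero => intro t; simpa using (hg t).trans (le_add_of_nonneg_right zero_le_one)
    | succ k ih =>
      rw [Function.iterate_succ_apply']
      exact norm_tonelliStep_le hf g hbc hKc hg hfK ih
  have hstable : ∀ k : ℕ, EqOn (Φ^[k + 1] g) (Φ^[k] g) (Iic (b + k * h)) := by
    intro k
    induction k with
    | zero => simpa using tonelliStep_eqOn_Iic hf g hbc hh.le g
    | succ k ih =>
      have : EqOn (Φ (Φ^[k + 1] g)) (Φ (Φ^[k] g)) (Iic (b + k * h + h)) :=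
        tonelliStep_eqOn_of_eqOn hf g hbc ih (by nlinarith [k.cast_nonneg (α := ℝ)])
      rw [← Function.iterate_succ_apply' Φ, ← Function.iterate_succ_apply' Φ] at this
      rwa [Nat.cast_succ, add_mul, one_mul, ← add_assoc]
  obtain ⟨N, hN⟩ := exists_nat_ge ((c - b) / h)
  refine ⟨Φ^[N] g, hbound N, ?_⟩
  rw [← Function.iterate_succ_apply' Φ N g]
  exact (hstable N).mono (Iic_subset_Iic.2 (by rw [div_le_iff₀ hh] at hN; linarith))

end Tonelli

theorem exists_tonelli_approx (hf : Continuous (Function.uncurry f)) {g : C(ℝ, E)} {b c M h : ℝ}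
    {K : ℝ≥0} (hbc : b ≤ c) (hKc : K * (c - b) ≤ 1) (hg : ∀ t, ‖g t‖ ≤ M)
    (hfK : ∀ s ∈ Icc b c, ∀ u, ‖u‖ ≤ M + 1 → ‖f s u‖ ≤ K) (hh : 0 < h) :
    ∃ y : C(ℝ, E), EqOn y g (Iic b) ∧ (∀ t, ‖y t‖ ≤ M + 1) ∧ LipschitzOnWith K y (Icc b c) ∧
      ∀ t ∈ Icc b c, ‖y t - y b - ∫ s in b..t, f s (segmentMap r y s)‖ ≤ K * h := by
  obtain ⟨y, hyM, hy⟩ := exists_eqOn_tonelliStep hf g hbc hKc hg hfK hh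
  set p : ℝ → Icc b c := fun t => projIcc b c hbc (t - h)
  have hyg : EqOn y g (Iic b) := fun t ht =>
    (hy (mem_Iic.2 (ht.trans hbc))).symm.trans (tonelliStep_eqOn_Iic hf g hbc hh.le y ht)
  have hyp : ∀ t ∈ Icc b c, y t = y b + ∫ s in b..(p t : ℝ), f s (segmentMap r y s) := by
    intro t ht
    rw [← hy ht.2, tonelliStep_apply, min_eq_right ht.1, hyg (mem_Iic.2 le_rfl)]
  have hint := fun u v => (continuous_apply_segmentMap hf y).intervalIntegrable (μ := volume) u v
  refine ⟨y, hyg, hyM, LipschitzOnWith.of_dist_le_mul fun t ht t' ht' => ?_, fun t ht => ?_⟩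
  · rw [dist_eq_norm, hyp t ht, hyp t' ht', add_sub_add_left_eq_sub,
      intervalIntegral.integral_interval_sub_left (hint _ _) (hint _ _)]
    refine (norm_integral_apply_segmentMap_le hyM hfK (p t').2 (p t).2).trans
      (mul_le_mul_of_nonneg_left ?_ K.2)
    simpa [Subtype.dist_eq, Real.dist_eq] using
      (LipschitzWith.projIcc hbc).dist_le_mul (t - h) (t' - h)
  · rw [hyp t ht, add_sub_cancel_left,
      intervalIntegral.integral_interval_sub_left (hint _ _) (hint _ _)]
    refine (norm_integral_apply_segmentMap_le hyM hfK ht (p t).2).trans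
      (mul_le_mul_of_nonneg_left ?_ K.2)
    have hpt : (p t : ℝ) = max b (t - h) := by
      rw [coe_projIcc, min_eq_right (by linarith [ht.2])]
    rw [hpt, abs_le]
    constructor <;> cases max_choice b (t - h) <;> simp_all <;> linarith [ht.1]

theorem isSolutionOn_of_tendstoUniformlyOn (hf : Continuous (Function.uncurry f))
    {y : ℕ → C(ℝ, E)} {Y : C(ℝ, E)} {δ : ℕ → ℝ} {a c K : ℝ}
    (hy : TendstoUniformlyOn (fun l => ⇑(y l)) Y atTop (Iic c))
    (hK : ∀ l, ∀ s ∈ Icc a c, ‖f s (segmentMap r (y l) s)‖ ≤ K)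
    (happrox : ∀ l, ∀ t ∈ Icc a c,
      ‖y l t - y l a - ∫ s in a..t, f s (segmentMap r (y l) s)‖ ≤ δ l)
    (hδ : Tendsto δ atTop (𝓝 0)) : IsSolutionOn r f Y a c := by
  intro t ht
  have hint : Tendsto (fun l => ∫ s in a..t, f s (segmentMap r (y l) s)) atTop
      (𝓝 (∫ s in a..t, f s (segmentMap r Y s))) := by
    refine intervalIntegral.tendsto_integral_filter_of_dominated_convergence (fun _ => K)
      (Eventually.of_forall fun l => (continuous_apply_segmentMap hf (y l)).aestronglyMeasurable)
      (Eventually.of_forall fun l => ae_of_all _ fun s hs => hK l s ?_) intervalIntegrable_const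
      (ae_of_all _ fun s hs => ?_)
    · rw [uIoc_of_le ht.1] at hs
      exact ⟨hs.1.le, hs.2.trans ht.2⟩
    · rw [uIoc_of_le ht.1] at hs
      exact (hf.tendsto (s, segmentMap r Y s)).comp
        (tendsto_const_nhds.prodMk_nhds (hy.tendsto_segmentMap (hs.2.trans ht.2)))
  have hlim := ((hy.tendsto_at (mem_Iic.2 ht.2)).sub
    (hy.tendsto_at (mem_Iic.2 (ht.1.trans ht.2)))).sub hint
  have h0 := norm_le_zero_iff.1 <|
    le_of_tendsto_of_tendsto' hlim.norm hδ fun l => happrox l t ht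
  rwa [sub_sub, sub_eq_zero] at h0

theorem exists_eqOn_Iic_isSolutionOn [ProperSpace E] (hf : Continuous (Function.uncurry f))
    {g : C(ℝ, E)} {b c M : ℝ} {K : ℝ≥0} (hbc : b ≤ c) (hKc : K * (c - b) ≤ 1) (hg : ∀ t, ‖g t‖ ≤ M)
    (hfK : ∀ s ∈ Icc b c, ∀ u, ‖u‖ ≤ M + 1 → ‖f s u‖ ≤ K) :
    ∃ y : C(ℝ, E), EqOn y g (Iic b) ∧ IsSolutionOn r f y b c := by
  choose y hyg hyM hyK hy using fun j : ℕ =>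
    exists_tonelli_approx hf hbc hKc hg hfK (h := 1 / (j + 1)) Nat.one_div_pos_of_nat
  obtain ⟨Y, φ, hφ, hYg, hYy⟩ := exists_subseq_tendstoUniformlyOn hbc hyg (fun j t _ => hyM j t) hyK
  have hM : 0 ≤ M + 1 := by linarith [(norm_nonneg _).trans (hg 0)]
  refine ⟨Y, hYg, isSolutionOn_of_tendstoUniformlyOn hf hYy
    (fun l s hs => hfK s hs _ (norm_segmentMap_le hM (hyM _) s)) (fun l => hy (φ l)) ?_⟩
  simpa using (tendsto_one_div_add_atTop_nhds_zero_nat.comp hφ.tendsto_atTop).const_mul (K : ℝ)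

theorem IsSolutionOn.exists_extension [ProperSpace E] (hf : Continuous (Function.uncurry f))
    {g : C(ℝ, E)} {a b M : ℝ}
    {K : ℝ≥0} (hg : IsSolutionOn r f g a b) (hab : a ≤ b) (hgM : ∀ t, ‖g t‖ ≤ M)
    (hfK : ∀ s ≥ b, ∀ u, ‖u‖ ≤ M + 1 → ‖f s u‖ ≤ K) :
    ∃ c > b, ∃ y : C(ℝ, E), EqOn y g (Iic b) ∧ IsSolutionOn r f y a c := by
  have hK : (0:ℝ) < K + 1 := by positivity
  have hbc : b < b + 1 / (K + 1) := lt_add_of_pos_right b (by positivity)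
  have hKc : K * (b + 1 / (K + 1) - b) ≤ 1 := by
    rw [add_sub_cancel_left, mul_one_div, div_le_one hK]
    linarith
  obtain ⟨y, hyg, hy⟩ := exists_eqOn_Iic_isSolutionOn hf hbc.le hKc hgM
    fun s hs => hfK s hs.1
  exact ⟨_, hbc, y, hyg, (hg.congr hyg hab).trans hf hy ⟨hab, hbc.le⟩⟩

end Solutions

theorem stmt_7_general (d : ℕ) (r : ℝ) (hr : 0 ≤ r)
    (f : ℝ → C(Icc (-r) (0:ℝ), Fin d → ℝ) → (Fin d → ℝ))
    (hf : Continuous fun p : ℝ × C(Icc (-r) (0:ℝ), Fin d → ℝ) => f p.1 p.2)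
    (hqb : ∀ B : Set C(Icc (-r) (0:ℝ), Fin d → ℝ), Bornology.IsBounded B →
      ∃ M : ℝ, ∀ t ≥ (0:ℝ), ∀ u ∈ B, ‖f t u‖ ≤ M)
    (φ : C(Icc (-r) (0:ℝ), Fin d → ℝ))
    (b : ℝ) (hb : 0 < b)
    (x : ℝ → (Fin d → ℝ)) (X : ℝ → C(Icc (-r) (0:ℝ), Fin d → ℝ))
    (hxc : ContinuousOn x (Ico (-r) b))
    (hX : ∀ t : ℝ, ∀ θ : Icc (-r) (0:ℝ), X t θ = x (t + θ))
    (hinit : X 0 = φ)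
    (hsol : ∀ t ∈ Ico (0:ℝ) b, x t = x 0 + ∫ s in (0:ℝ)..t, f s (X s))
    (hmax : ¬ ∃ b' > b, ∃ x' : ℝ → (Fin d → ℝ),
      ∃ X' : ℝ → C(Icc (-r) (0:ℝ), Fin d → ℝ),
        ContinuousOn x' (Ico (-r) b') ∧
        (∀ t : ℝ, ∀ θ : Icc (-r) (0:ℝ), X' t θ = x' (t + θ)) ∧
        X' 0 = φ ∧
        (∀ t ∈ Ico (0:ℝ) b', x' t = x' 0 + ∫ s in (0:ℝ)..t, f s (X' s)) ∧
        (∀ t ∈ Ico (-r) b, x' t = x t)) :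
    ¬ ∃ M : ℝ, ∀ t ∈ Ico (-r) b, ‖x t‖ ≤ M := by
  rintro ⟨M, hM⟩
  obtain ⟨K, hK⟩ := hqb (Metric.closedBall 0 (M + 1)) Metric.isBounded_closedBall
  have hfK : ∀ t ≥ 0, ∀ u, ‖u‖ ≤ M + 1 → ‖f t u‖ ≤ K.toNNReal := fun t ht u hu =>
    (hK t ht u (mem_closedBall_zero_iff.2 hu)).trans (Real.le_coe_toNNReal K)
  obtain ⟨g, hgx, hgM, hg⟩ := exists_continuousMap_isSolutionOn_of_bounded hf hr hb hxc hX hsol hM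
    fun t ht u hu => hfK t ht.1 u (by linarith)
  obtain ⟨c, hbc, y, hyg, hy⟩ := hg.exists_extension hf hb.le hgM fun s hs => hfK s (hb.le.trans hs)
  have hyx : EqOn y x (Ico (-r) b) := fun t ht => (hyg (mem_Iic.2 ht.2.le)).trans (hgx ht)
  refine hmax ⟨c, hbc, y, segmentMap r y, y.continuous.continuousOn, fun _ _ => rfl, ?_,
    fun t ht => hy t (Ico_subset_Icc_self ht), hyx⟩
  rw [← hinit]
  ext1 θ
  rw [segmentMap_apply, hX, hyx ⟨by linarith [θ.2.1], by linarith [θ.2.2]⟩]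

/-- A noncontinuable solution of an RFDE with quasi-bounded right-hand side and finite
escape time `b` must be unbounded.  Here `X t` plays the role of the segment `x_t`. -/
theorem stmt_7 (d : ℕ) (hd : 0 < d) (r : ℝ) (hr : 0 ≤ r)
    (f : ℝ → C(Icc (-r) (0:ℝ), Fin d → ℝ) → (Fin d → ℝ))
    (hf : Continuous fun p : ℝ × C(Icc (-r) (0:ℝ), Fin d → ℝ) => f p.1 p.2)
    (hqb : ∀ B : Set C(Icc (-r) (0:ℝ), Fin d → ℝ), Bornology.IsBounded B →
      ∃ M : ℝ, ∀ t ≥ (0:ℝ), ∀ u ∈ B, ‖f t u‖ ≤ M)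
    (φ : C(Icc (-r) (0:ℝ), Fin d → ℝ))
    (b : ℝ) (hb : 0 < b)
    (x : ℝ → (Fin d → ℝ)) (X : ℝ → C(Icc (-r) (0:ℝ), Fin d → ℝ))
    (hxc : ContinuousOn x (Ico (-r) b))
    (hX : ∀ t : ℝ, ∀ θ : Icc (-r) (0:ℝ), X t θ = x (t + θ))
    (hinit : X 0 = φ)
    (hsol : ∀ t ∈ Ico (0:ℝ) b, x t = x 0 + ∫ s in (0:ℝ)..t, f s (X s))
    (hmax : ¬ ∃ b' > b, ∃ x' : ℝ → (Fin d → ℝ),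
      ∃ X' : ℝ → C(Icc (-r) (0:ℝ), Fin d → ℝ),
        ContinuousOn x' (Ico (-r) b') ∧
        (∀ t : ℝ, ∀ θ : Icc (-r) (0:ℝ), X' t θ = x' (t + θ)) ∧
        X' 0 = φ ∧
        (∀ t ∈ Ico (0:ℝ) b', x' t = x' 0 + ∫ s in (0:ℝ)..t, f s (X' s)) ∧
        (∀ t ∈ Ico (-r) b, x' t = x t)) :
    ¬ ∃ M : ℝ, ∀ t ∈ Ico (-r) b, ‖x t‖ ≤ M :=
  stmt_7_general d r hr f hf hqb φ b hb x X hxc hX hinit hsol hmax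
end

section
/- If f : ℝ≥0 × C([-r,0],ℝ^d) → ℝ^d is continuous and for each u ∈ C the average F(u) = lim_{T→∞}(1/T)∫₀^T f(t,u)dt exists, and f is continuous in the second variable uniformly with respect to the first, then F satisfies: for every compact K ⊂ C([-r,0],ℝ^d) and δ > 0 there exists T₀ such that for all T ≥ T₀ and all u ∈ K, |(1/T)∫₀^T f(t,u)dt − F(u)| < δ (i.e. the Cesàro convergence is uniform on compact sets). -/
open Filter Set intervalIntegral

theorem stmt_16 (d : ℕ) (hd : 0 < d) (r : ℝ) (hr : 0 ≤ r)
    (f : ℝ → C(Icc (-r) (0:ℝ), Fin d → ℝ) → (Fin d → ℝ))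
    (hf : Continuous fun p : ℝ × C(Icc (-r) (0:ℝ), Fin d → ℝ) => f p.1 p.2)
    (huc : ∀ u₀ : C(Icc (-r) (0:ℝ), Fin d → ℝ), ∀ ε > 0, ∃ δ > 0,
      ∀ t ≥ (0:ℝ), ∀ u : C(Icc (-r) (0:ℝ), Fin d → ℝ),
        ‖u - u₀‖ < δ → ‖f t u - f t u₀‖ < ε)
    (F : C(Icc (-r) (0:ℝ), Fin d → ℝ) → (Fin d → ℝ))
    (hF : ∀ u : C(Icc (-r) (0:ℝ), Fin d → ℝ),
      Tendsto (fun T : ℝ => (1 / T) • ∫ t in (0:ℝ)..T, f t u) atTop (nhds (F u))) :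
    ∀ K : Set C(Icc (-r) (0:ℝ), Fin d → ℝ), IsCompact K →
      ∀ δ > 0, ∃ T₀ : ℝ, ∀ T ≥ T₀, ∀ u ∈ K,
        ‖(1 / T) • (∫ t in (0:ℝ)..T, f t u) - F u‖ < δ := by
  classical
  intro K hK δ hδ
  
  set g : ℝ → C(Icc (-r) (0:ℝ), Fin d → ℝ) → (Fin d → ℝ) := fun T u => (1 / T) • ∫ t in (0:ℝ)..T, f t u with hg
  have hε : (0:ℝ) < δ / 3 := by linarith
  -- choose radii from uniform continuity
  have hchoice : ∀ u₀ : C(Icc (-r) (0:ℝ), Fin d → ℝ), ∃ ρ > 0, ∀ t ≥ (0:ℝ), ∀ u : C(Icc (-r) (0:ℝ), Fin d → ℝ),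
      ‖u - u₀‖ < ρ → ‖f t u - f t u₀‖ < δ / 3 := fun u₀ => huc u₀ _ hε
  choose ρ hρ hprop using hchoice
  -- continuity in t
  have hcont : ∀ u : C(Icc (-r) (0:ℝ), Fin d → ℝ), Continuous fun t => f t u := fun u =>
    hf.comp (continuous_id.prodMk continuous_const)
  -- key estimate
  have key : ∀ (u₀ u : C(Icc (-r) (0:ℝ), Fin d → ℝ)), ‖u - u₀‖ < ρ u₀ → ∀ T : ℝ, 1 ≤ T →
      ‖g T u - g T u₀‖ ≤ δ / 3 := by
    intro u₀ u hu T hT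
    have hT0 : (0:ℝ) < T := lt_of_lt_of_le one_pos hT
    have hi : IntervalIntegrable (fun t => f t u) MeasureTheory.volume 0 T :=
      (hcont u).intervalIntegrable 0 T
    have hi₀ : IntervalIntegrable (fun t => f t u₀) MeasureTheory.volume 0 T :=
      (hcont u₀).intervalIntegrable 0 T
    have hsub : g T u - g T u₀ = (1 / T) • ∫ t in (0:ℝ)..T, (f t u - f t u₀) := by
      rw [intervalIntegral.integral_sub hi hi₀, smul_sub]
    have hbound : ‖∫ t in (0:ℝ)..T, (f t u - f t u₀)‖ ≤ (δ / 3) * |T - 0| := by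
      apply intervalIntegral.norm_integral_le_of_norm_le_const
      intro x hx
      rw [Set.uIoc_of_le hT0.le] at hx
      exact (hprop u₀ x hx.1.le u hu).le
    rw [hsub, norm_smul]
    have : ‖(1:ℝ) / T‖ = 1 / T := by
      rw [Real.norm_eq_abs, abs_of_pos (by positivity)]
    rw [this]
    calc (1 / T) * ‖∫ t in (0:ℝ)..T, (f t u - f t u₀)‖
        ≤ (1 / T) * ((δ / 3) * |T - 0|) := by
          exact mul_le_mul_of_nonneg_left hbound (by positivity)
      _ = δ / 3 := by
          rw [sub_zero, abs_of_pos hT0]; field_simp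
  -- limit estimate : ‖F u - F u₀‖ ≤ δ/3 when close
  have keyF : ∀ (u₀ u : C(Icc (-r) (0:ℝ), Fin d → ℝ)), ‖u - u₀‖ < ρ u₀ → ‖F u - F u₀‖ ≤ δ / 3 := by
    intro u₀ u hu
    have htend : Tendsto (fun T => ‖g T u - g T u₀‖) atTop (nhds ‖F u - F u₀‖) :=
      ((hF u).sub (hF u₀)).norm
    refine le_of_tendsto htend ?_
    filter_upwards [eventually_ge_atTop (1:ℝ)] with T hT
    exact key u₀ u hu T hT
  -- cover
  obtain ⟨s, hsK, hcover⟩ := hK.elim_nhds_subcover (fun u => Metric.ball u (ρ u))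
    (fun u _ => Metric.ball_mem_nhds u (hρ u))
  -- eventual bound at centers
  have hev : ∀ᶠ T in atTop, (1 ≤ T) ∧ ∀ u₀ ∈ s, ‖g T u₀ - F u₀‖ < δ / 3 := by
    refine (eventually_ge_atTop (1:ℝ)).and ?_
    rw [eventually_all_finset]
    intro u₀ _
    have h := (hF u₀).eventually (Metric.ball_mem_nhds (F u₀) hε)
    filter_upwards [h] with T hT
    rw [dist_eq_norm] at hT
    exact hT
  obtain ⟨T₀, hT₀⟩ := eventually_atTop.1 hev
  refine ⟨T₀, fun T hT u hu => ?_⟩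
  obtain ⟨hT1, hcenters⟩ := hT₀ T hT
  obtain ⟨u₀, hu₀s, huball⟩ := Set.mem_iUnion₂.1 (hcover hu)
  have hdist : ‖u - u₀‖ < ρ u₀ := by
    rw [← dist_eq_norm]; exact huball
  have h1 : ‖g T u - g T u₀‖ ≤ δ / 3 := key u₀ u hdist T hT1
  have h2 : ‖g T u₀ - F u₀‖ < δ / 3 := hcenters u₀ hu₀s
  have h3 : ‖F u₀ - F u‖ ≤ δ / 3 := by
    rw [norm_sub_rev]; exact keyF u₀ u hdist
  have : ‖g T u - F u‖ ≤ ‖g T u - g T u₀‖ + ‖g T u₀ - F u₀‖ + ‖F u₀ - F u‖ := by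
    have := norm_sub_le_norm_sub_add_norm_sub (g T u) (g T u₀) (F u)
    have h' := norm_sub_le_norm_sub_add_norm_sub (g T u₀) (F u₀) (F u)
    linarith
  calc ‖(1 / T) • (∫ t in (0:ℝ)..T, f t u) - F u‖ = ‖g T u - F u‖ := rfl
    _ ≤ ‖g T u - g T u₀‖ + ‖g T u₀ - F u₀‖ + ‖F u₀ - F u‖ := this
    _ < δ / 3 + δ / 3 + δ / 3 := by linarith
    _ = δ := by ring
end
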